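/- arXiv:cs/0408055 — 4 statements merged into one kernel-verified Lean document; each statement's English description precedes it below -/
import Mathlib

section
/- For proportionate selection, the selection strength with respect to an NFD φ whose support consists of positive reals equals the mean absolute deviation of φ divided by its mean: d(φ, Γ_prop φ) = (Σ_{x ∈ E_φ} φ(x) |μ_φ − x|) / μ_φ, where μ_φ = Σ_{x ∈ E_φ} x φ(x). -/
structure IsNFD (φ : ℝ → ℝ) : Prop where
  mem_Icc : ∀ x, φ x ∈ Set.Icc (0 : ℝ) 1
  finite_support : (Function.support φ).Finite
  sum_eq_one : ∑ᶠ x, φ x = 1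

noncomputable def nfdDist (φ₁ φ₂ : ℝ → ℝ) : ℝ :=
  ∑ᶠ x, |φ₁ x - φ₂ x|

noncomputable def propSelection (φ : ℝ → ℝ) : ℝ → ℝ :=
  fun x => x * φ x / ∑ᶠ y, y * φ y

/-! Pointwise, `φ x - (Γ_prop φ) x = φ x (μ - x) / μ`; summing absolute values and pulling out
the positive constant `μ` gives the mean absolute deviation over the mean. -/

section propSelection

variable {φ : ℝ → ℝ}

theorem sub_propSelection (x : ℝ) (hμ : ∑ᶠ y, y * φ y ≠ 0) :
    φ x - propSelection φ x = φ x * ((∑ᶠ y, y * φ y) - x) / ∑ᶠ y, y * φ y := by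
  unfold propSelection
  field_simp

theorem abs_sub_propSelection (hφ : ∀ x, 0 ≤ φ x) (hμ : 0 < ∑ᶠ y, y * φ y) (x : ℝ) :
    |φ x - propSelection φ x| = φ x * |(∑ᶠ y, y * φ y) - x| / ∑ᶠ y, y * φ y := by
  rw [sub_propSelection x hμ.ne', abs_div, abs_mul, abs_of_nonneg (hφ x), abs_of_pos hμ]

theorem nfdDist_propSelection_of_mean_pos (hφ : ∀ x, 0 ≤ φ x) (hμ : 0 < ∑ᶠ y, y * φ y) :
    nfdDist φ (propSelection φ) =
      (∑ᶠ x, φ x * |(∑ᶠ y, y * φ y) - x|) / (∑ᶠ y, y * φ y) := by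
  simp only [nfdDist, abs_sub_propSelection hφ hμ, div_eq_mul_inv, finsum_mul]

end propSelection

namespace IsNFD

variable {φ : ℝ → ℝ}

theorem nonneg (hφ : IsNFD φ) (x : ℝ) : 0 ≤ φ x :=
  (hφ.mem_Icc x).1

theorem exists_ne_zero (hφ : IsNFD φ) : ∃ x, φ x ≠ 0 := by
  by_contra! h
  simpa [h] using hφ.sum_eq_one

theorem mean_pos (hφ : IsNFD φ) (hpos : Function.support φ ⊆ Set.Ioi 0) :
    0 < ∑ᶠ y, y * φ y := by
  have hterm (y : ℝ) : 0 ≤ y * φ y := by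
    by_cases hy : φ y = 0
    · simp [hy]
    · exact mul_nonneg (le_of_lt (hpos hy)) (hφ.nonneg y)
  obtain ⟨x, hx⟩ := hφ.exists_ne_zero
  refine finsum_pos hterm ⟨x, mul_pos (hpos hx) ((hφ.nonneg x).lt_of_ne' hx)⟩ ?_
  exact hφ.finite_support.subset (Function.support_mul_subset_right _ _)

end IsNFD

/-- For proportionate selection, the selection strength with respect to an NFD `φ`
with positive support equals the mean absolute deviation divided by the mean:
`d(φ, Γ_prop φ) = (Σ_{x ∈ E_φ} φ(x) |μ_φ − x|) / μ_φ` where `μ_φ = Σ_{x ∈ E_φ} x φ(x)`. -/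
theorem nfdDist_propSelection (φ : ℝ → ℝ) (hφ : IsNFD φ)
    (hpos : Function.support φ ⊆ Set.Ioi (0 : ℝ)) :
    nfdDist φ (propSelection φ) =
      (∑ᶠ x, φ x * |(∑ᶠ y, y * φ y) - x|) / (∑ᶠ y, y * φ y) :=
  nfdDist_propSelection_of_mean_pos hφ.nonneg (hφ.mean_pos hpos)
end

section
/- For any NFD φ with E_φ ⊂ [0,∞), any sequence {g_k} of nonnegative reals, and any n > m with n, m ∈ ℤ⁺, the Boltzmann selection schedule {Γ_(n)} satisfies d(Γ_(n)φ, Γ_(m)φ) ≤ Σ_{x ∈ E_φ} ( exp(x Σ_{k=m+1}^n g_k) − 1 ). -/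
/-- The Boltzmann selection schedule associated to a sequence `{g_k}`:
`(Γ_(n) φ)(x) = φ(x) exp(x Σ_{k=1}^n g_k) / Σ_{y ∈ E_φ} φ(y) exp(y Σ_{k=1}^n g_k)`. -/
noncomputable def boltzmannSchedule (g : ℕ → ℝ) (n : ℕ) (φ : ℝ → ℝ) : ℝ → ℝ :=
  fun x => φ x * Real.exp (x * ∑ k ∈ Finset.Icc 1 n, g k) /
    ∑ᶠ y, φ y * Real.exp (y * ∑ k ∈ Finset.Icc 1 n, g k)

/-! Write `Γ_(n)φ` as the exponential tilt of `φ` by `x ↦ exp (x Σ_{k ≤ n} g_k)`. Tilts compose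
multiplicatively, so `Γ_(n)φ` is the tilt of the probability vector `q = Γ_(m)φ` by
`T x = exp (x Σ_{k=m+1}^n g_k) ≥ 1`, with `E = Σ q T ≥ 1`. The distance is
`Σ q |T - E| / E ≤ Σ q |T - E| = 2 Σ q (T - E)⁺`, and `E ≥ q_x T_x + (1 - q_x)` gives
`q_x (T_x - E)⁺ ≤ q_x (1 - q_x) (T_x - 1) ≤ (T_x - 1) / 4`. -/

open Finset Function

noncomputable def tilt (φ T : ℝ → ℝ) : ℝ → ℝ :=
  fun x => φ x * T x / ∑ᶠ y, φ y * T y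

lemma boltzmannSchedule_eq_tilt (g : ℕ → ℝ) (n : ℕ) (φ : ℝ → ℝ) :
    boltzmannSchedule g n φ = tilt φ (fun x => Real.exp (x * ∑ k ∈ Icc 1 n, g k)) :=
  rfl

section Tilt

variable {φ T U : ℝ → ℝ}

lemma support_tilt_subset : support (tilt φ T) ⊆ support φ := fun x hx h0 =>
  hx (by simp [tilt, h0])

lemma tilt_nonneg (hφ : ∀ x, 0 ≤ φ x) (hT : ∀ x, 0 ≤ T x) (x : ℝ) : 0 ≤ tilt φ T x :=
  div_nonneg (mul_nonneg (hφ x) (hT x)) (finsum_nonneg fun y => mul_nonneg (hφ y) (hT y))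

lemma finsum_tilt (h : ∑ᶠ y, φ y * T y ≠ 0) : ∑ᶠ x, tilt φ T x = 1 := by
  simp only [tilt, div_eq_mul_inv, ← finsum_mul, mul_inv_cancel₀ h]

lemma tilt_tilt (h : ∑ᶠ y, φ y * T y ≠ 0) : tilt (tilt φ T) U = tilt φ (T * U) := by
  have hsum : ∑ᶠ y, tilt φ T y * U y = (∑ᶠ y, φ y * (T * U) y) / ∑ᶠ y, φ y * T y := by
    rw [div_eq_mul_inv, finsum_mul]
    exact finsum_congr fun y => by simp only [tilt, Pi.mul_apply]; ring
  funext x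
  rw [tilt, hsum, tilt, tilt, Pi.mul_apply, mul_div_right_comm, div_div_div_cancel_right₀ h]
  ring

lemma finsum_mul_pos (hφ₀ : ∀ x, 0 ≤ φ x) (hφ : (support φ).Finite) (hφ₁ : ∑ᶠ x, φ x ≠ 0)
    (hT : ∀ x, 0 < T x) : 0 < ∑ᶠ x, φ x * T x := by
  obtain ⟨x, hx⟩ : ∃ x, φ x ≠ 0 := by
    by_contra! h
    simp [h] at hφ₁
  refine finsum_pos (fun y => mul_nonneg (hφ₀ y) (hT y).le)
    ⟨x, mul_pos ((hφ₀ x).lt_of_ne' hx) (hT x)⟩ ?_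
  exact hφ.subset (support_mul_subset_left _ _)

end Tilt

section Finite

variable {ι : Type*} {s : Finset ι} {q T : ι → ℝ}

lemma sum_mul_abs_eq_two_mul_sum_mul_posPart (d : ι → ℝ) (h : ∑ x ∈ s, q x * d x = 0) :
    ∑ x ∈ s, q x * |d x| = 2 * ∑ x ∈ s, q x * (d x)⁺ := by
  have hterm : ∀ x, q x * |d x| = 2 * (q x * (d x)⁺) - q x * d x := fun x => by
    have h2 := abs_add_eq_two_nsmul_posPart (d x)
    rw [two_nsmul] at h2
    linear_combination q x * h2
  rw [sum_congr rfl fun x _ => hterm x, sum_sub_distrib, ← mul_sum, h, sub_zero]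

lemma mul_add_one_sub_le_sum_mul (hq : ∀ x ∈ s, 0 ≤ q x) (hq₁ : ∑ x ∈ s, q x = 1)
    (hT : ∀ x ∈ s, 1 ≤ T x) {x : ι} (hx : x ∈ s) :
    q x * T x + (1 - q x) ≤ ∑ y ∈ s, q y * T y := by
  have := single_le_sum (f := fun y => q y * (T y - 1))
    (fun y hy => mul_nonneg (hq y hy) (sub_nonneg.2 (hT y hy))) hx
  simp only [mul_sub, mul_one, sum_sub_distrib, hq₁] at this
  linarith

lemma sum_abs_tilt_sub_le (hq : ∀ x ∈ s, 0 ≤ q x) (hq₁ : ∑ x ∈ s, q x = 1)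
    (hT : ∀ x ∈ s, 1 ≤ T x) :
    ∑ x ∈ s, |q x * T x / ∑ y ∈ s, q y * T y - q x| ≤ (∑ x ∈ s, (T x - 1)) / 2 := by
  set E := ∑ y ∈ s, q y * T y
  have hE : 1 ≤ E := hq₁ ▸ sum_le_sum fun x hx => le_mul_of_one_le_right (hq x hx) (hT x hx)
  have hmean : ∑ x ∈ s, q x * (T x - E) = 0 := by
    simp only [mul_sub, sum_sub_distrib, ← sum_mul, hq₁, one_mul, sub_self, E]
  have hpos : ∀ x ∈ s, q x * (T x - E)⁺ ≤ (T x - 1) / 4 := by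
    intro x hx
    have hqx : q x ≤ 1 := hq₁ ▸ single_le_sum hq hx
    have hEx := mul_add_one_sub_le_sum_mul hq hq₁ hT hx
    calc q x * (T x - E)⁺ ≤ q x * ((1 - q x) * (T x - 1)) := by
          refine mul_le_mul_of_nonneg_left (sup_le ?_ ?_) (hq x hx)
          · linarith
          · exact mul_nonneg (sub_nonneg.2 hqx) (sub_nonneg.2 (hT x hx))
      _ ≤ (T x - 1) / 4 := by nlinarith [sq_nonneg (2 * q x - 1), hT x hx]
  calc ∑ x ∈ s, |q x * T x / E - q x| = (∑ x ∈ s, q x * |T x - E|) / E := by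
        rw [sum_div]
        refine sum_congr rfl fun x hx => ?_
        rw [show q x * T x / E - q x = q x * (T x - E) / E by field_simp, abs_div, abs_mul,
          abs_of_nonneg (hq x hx), abs_of_pos (show 0 < E by linarith)]
    _ ≤ ∑ x ∈ s, q x * |T x - E| :=
        div_le_self (sum_nonneg fun x hx => mul_nonneg (hq x hx) (abs_nonneg _)) hE
    _ = 2 * ∑ x ∈ s, q x * (T x - E)⁺ := sum_mul_abs_eq_two_mul_sum_mul_posPart _ hmean
    _ ≤ 2 * ∑ x ∈ s, (T x - 1) / 4 := by gcongr with x hx; exact hpos x hx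
    _ = (∑ x ∈ s, (T x - 1)) / 2 := by rw [← sum_div]; ring

end Finite

lemma nfdDist_tilt_le {ψ T : ℝ → ℝ} {s : Finset ℝ} (hψ₀ : ∀ x, 0 ≤ ψ x) (hψ₁ : ∑ᶠ x, ψ x = 1)
    (hs : support ψ ⊆ s) (hT : ∀ x ∈ s, 1 ≤ T x) :
    nfdDist (tilt ψ T) ψ ≤ (∑ x ∈ s, (T x - 1)) / 2 := by
  have hsum : ∀ f : ℝ → ℝ, support f ⊆ support ψ → ∑ᶠ x, f x = ∑ x ∈ s, f x :=
    fun f hf => finsum_eq_sum_of_support_subset f (hf.trans hs)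
  have hZ : ∑ᶠ y, ψ y * T y = ∑ y ∈ s, ψ y * T y := hsum _ (support_mul_subset_left _ _)
  rw [nfdDist, hsum _ fun x hx hψx => hx (by simp [tilt, hψx])]
  simp only [tilt, hZ]
  exact sum_abs_tilt_sub_le (fun x _ => hψ₀ x) ((hsum ψ subset_rfl).symm.trans hψ₁) hT

theorem nfdDist_boltzmannSchedule_le_sum_exp_general (g : ℕ → ℝ) (hg : ∀ k, 0 ≤ g k)
    (φ : ℝ → ℝ) (hφ : IsNFD φ) (hnn : Function.support φ ⊆ Set.Ici (0 : ℝ))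
    (n m : ℕ) (hmn : m < n) :
    nfdDist (boltzmannSchedule g n φ) (boltzmannSchedule g m φ) ≤
      ∑ x ∈ hφ.finite_support.toFinset,
        (Real.exp (x * ∑ k ∈ Finset.Icc (m + 1) n, g k) - 1) := by
  set s := hφ.finite_support.toFinset
  set B := ∑ k ∈ Icc (m + 1) n, g k
  have hφ₀ : ∀ x, 0 ≤ φ x := fun x => (hφ.mem_Icc x).1
  have hsplit : ∑ k ∈ Icc 1 n, g k = ∑ k ∈ Icc 1 m, g k + B := by
    simpa only [B, ← Icc_add_one_left_eq_Ioc, zero_add] using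
      (sum_Ioc_consecutive g (Nat.zero_le m) hmn.le).symm
  have hZ : ∑ᶠ y, φ y * Real.exp (y * ∑ k ∈ Icc 1 m, g k) ≠ 0 :=
    (finsum_mul_pos hφ₀ hφ.finite_support (hφ.sum_eq_one ▸ one_ne_zero) fun _ => Real.exp_pos _).ne'
  have hT : ∀ x ∈ s, 1 ≤ Real.exp (x * B) := fun x hx =>
    Real.one_le_exp (mul_nonneg (hnn (by simpa [s] using hx)) (sum_nonneg fun k _ => hg k))
  have hstep : boltzmannSchedule g n φ =
      tilt (boltzmannSchedule g m φ) (fun x => Real.exp (x * B)) := by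
    rw [boltzmannSchedule_eq_tilt, boltzmannSchedule_eq_tilt, tilt_tilt hZ]
    congr
    funext x
    rw [Pi.mul_apply, hsplit, mul_add, Real.exp_add]
  rw [hstep]
  refine (nfdDist_tilt_le (tilt_nonneg hφ₀ fun _ => (Real.exp_pos _).le) (finsum_tilt hZ)
    (support_tilt_subset.trans (by simp [s])) hT).trans (half_le_self (sum_nonneg ?_))
  exact fun x hx => sub_nonneg.2 (hT x hx)

/-- For `n > m` (both positive integers),
`d(Γ_(n)φ, Γ_(m)φ) ≤ Σ_{x ∈ E_φ} ( exp(x Σ_{k=m+1}^n g_k) − 1 )`. -/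
theorem nfdDist_boltzmannSchedule_le_sum_exp (g : ℕ → ℝ) (hg : ∀ k, 0 ≤ g k)
    (φ : ℝ → ℝ) (hφ : IsNFD φ) (hnn : Function.support φ ⊆ Set.Ici (0 : ℝ))
    (n m : ℕ) (hm : 0 < m) (hmn : m < n) :
    nfdDist (boltzmannSchedule g n φ) (boltzmannSchedule g m φ) ≤
      ∑ x ∈ hφ.finite_support.toFinset,
        (Real.exp (x * ∑ k ∈ Finset.Icc (m + 1) n, g k) - 1) :=
  nfdDist_boltzmannSchedule_le_sum_exp_general g hg φ hφ hnn n m hmn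
end

section
/- Let {g_k} be any sequence of nonnegative reals and let {Γ_(n)} be the corresponding Boltzmann selection schedule. If the sequence of partial sums {Σ_{k=1}^n g_k}_n is a Cauchy sequence in ℝ, then for every NFD φ with E_φ ⊂ [0,∞), the sequence {Γ_(n)φ}_n is a Cauchy sequence with respect to the metric d. -/
/-!
`Γ_(n)φ` depends on `g` only through the partial sum `t_n = Σ_{k=1}^n g_k`: it is the
exponential tilt `T(t) = φ · exp(· t) / Z(t)` evaluated at `t_n`. Since `φ` has finite support,
`d(T s, T t)` is a finite sum of continuous functions of `(s, t)` vanishing on the diagonal. The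
Cauchy sequence `t_n` converges to some `L`, so `d(T t_n, T t_m) → d(T L, T L) = 0`.
-/

open Filter Topology

noncomputable def boltzmannTilt (φ : ℝ → ℝ) (t : ℝ) : ℝ → ℝ :=
  fun x => φ x * Real.exp (x * t) / ∑ᶠ y, φ y * Real.exp (y * t)

theorem boltzmannSchedule_eq_boltzmannTilt (g : ℕ → ℝ) (n : ℕ) (φ : ℝ → ℝ) :
    boltzmannSchedule g n φ = boltzmannTilt φ (∑ k ∈ Finset.Icc 1 n, g k) :=
  rfl

theorem nfdDist_self (φ : ℝ → ℝ) : nfdDist φ φ = 0 := by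
  simp [nfdDist]

theorem nfdDist_eq_sum {φ₁ φ₂ : ℝ → ℝ} {s : Finset ℝ} (h₁ : Function.support φ₁ ⊆ s)
    (h₂ : Function.support φ₂ ⊆ s) : nfdDist φ₁ φ₂ = ∑ x ∈ s, |φ₁ x - φ₂ x| := by
  refine finsum_eq_sum_of_support_subset _ fun x hx => ?_
  by_contra hxs
  have h₁x : φ₁ x = 0 := Function.notMem_support.1 fun h => hxs (h₁ h)
  have h₂x : φ₂ x = 0 := Function.notMem_support.1 fun h => hxs (h₂ h)
  simp [h₁x, h₂x] at hx

theorem support_boltzmannTilt_subset (φ : ℝ → ℝ) (t : ℝ) :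
    Function.support (boltzmannTilt φ t) ⊆ Function.support φ := by
  intro x hx
  contrapose! hx
  rw [Function.notMem_support] at hx ⊢
  simp [boltzmannTilt, hx]

namespace IsNFD

variable {φ : ℝ → ℝ}

theorem exists_pos (hφ : IsNFD φ) : ∃ x, 0 < φ x := by
  by_contra! h
  have hzero : ∀ x, φ x = 0 := fun x => le_antisymm (h x) (hφ.mem_Icc x).1
  simpa [hzero] using hφ.sum_eq_one

theorem finsum_mul_exp_eq_sum (hφ : IsNFD φ) (t : ℝ) :
    ∑ᶠ y, φ y * Real.exp (y * t) = ∑ y ∈ hφ.finite_support.toFinset, φ y * Real.exp (y * t) :=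
  finsum_eq_sum_of_support_subset _ (by simp)

theorem finsum_mul_exp_pos (hφ : IsNFD φ) (t : ℝ) : 0 < ∑ᶠ y, φ y * Real.exp (y * t) := by
  obtain ⟨x₀, hx₀⟩ := hφ.exists_pos
  refine finsum_pos (fun y => mul_nonneg (hφ.mem_Icc y).1 (Real.exp_pos _).le)
    ⟨x₀, mul_pos hx₀ (Real.exp_pos _)⟩ ?_
  exact hφ.finite_support.subset (Function.support_mul_subset_left _ _)

theorem continuous_boltzmannTilt_apply (hφ : IsNFD φ) (x : ℝ) :
    Continuous fun t => boltzmannTilt φ t x := by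
  simp only [boltzmannTilt, hφ.finsum_mul_exp_eq_sum]
  refine Continuous.div (by fun_prop) (by fun_prop) fun t => ?_
  exact (hφ.finsum_mul_exp_eq_sum t ▸ hφ.finsum_mul_exp_pos t).ne'

theorem continuous_nfdDist_boltzmannTilt (hφ : IsNFD φ) :
    Continuous fun p : ℝ × ℝ => nfdDist (boltzmannTilt φ p.1) (boltzmannTilt φ p.2) := by
  have hsupp : ∀ t, Function.support (boltzmannTilt φ t) ⊆ hφ.finite_support.toFinset :=
    fun t => by simpa using support_boltzmannTilt_subset φ t
  simp only [nfdDist_eq_sum (hsupp _) (hsupp _)]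
  refine continuous_finsetSum _ fun x _ => ?_
  exact (((hφ.continuous_boltzmannTilt_apply x).comp continuous_fst).sub
    ((hφ.continuous_boltzmannTilt_apply x).comp continuous_snd)).abs

end IsNFD

theorem CauchySeq.tendsto_apply_pair_of_continuous {α : Type*} [UniformSpace α]
    [CompleteSpace α] {D : α × α → ℝ} (hD : Continuous D) (hdiag : ∀ a, D (a, a) = 0)
    {u : ℕ → α} (hu : CauchySeq u) :
    Tendsto (fun p : ℕ × ℕ => D (u p.1, u p.2)) atTop (𝓝 0) := by
  obtain ⟨L, hL⟩ := cauchySeq_tendsto_of_complete hu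
  rw [← hdiag L, ← prod_atTop_atTop_eq]
  exact (hD.tendsto (L, L)).comp ((hL.comp tendsto_fst).prodMk_nhds (hL.comp tendsto_snd))

theorem boltzmannSchedule_cauchy_general (g : ℕ → ℝ)
    (hCauchy : ∀ ε > (0 : ℝ), ∃ N : ℕ, ∀ n m : ℕ, N ≤ n → N ≤ m →
      |(∑ k ∈ Finset.Icc 1 n, g k) - (∑ k ∈ Finset.Icc 1 m, g k)| < ε)
    (φ : ℝ → ℝ) (hφ : IsNFD φ) :
    ∀ ε > (0 : ℝ), ∃ N : ℕ, ∀ n m : ℕ, N ≤ n → N ≤ m →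
      nfdDist (boltzmannSchedule g n φ) (boltzmannSchedule g m φ) < ε := by
  intro ε hε
  have hu : CauchySeq fun n => ∑ k ∈ Finset.Icc 1 n, g k :=
    Metric.cauchySeq_iff.2 fun δ hδ => (hCauchy δ hδ).imp fun N hN m hm n hn =>
      hN m n hm hn
  have hlim := hu.tendsto_apply_pair_of_continuous hφ.continuous_nfdDist_boltzmannTilt
    fun t => nfdDist_self _
  simp only [boltzmannSchedule_eq_boltzmannTilt]
  exact eventually_atTop_prod_self.1 (hlim.eventually (Iio_mem_nhds hε))

/-- If the partial sums `Σ_{k=1}^n g_k` form a Cauchy sequence, then for every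
NFD `φ` the sequence `{Γ_(n)φ}` is Cauchy with respect to the metric `d`. -/
theorem boltzmannSchedule_cauchy (g : ℕ → ℝ) (hg : ∀ k, 0 ≤ g k)
    (hCauchy : ∀ ε > (0 : ℝ), ∃ N : ℕ, ∀ n m : ℕ, N ≤ n → N ≤ m →
      |(∑ k ∈ Finset.Icc 1 n, g k) - (∑ k ∈ Finset.Icc 1 m, g k)| < ε)
    (φ : ℝ → ℝ) (hφ : IsNFD φ) (hnn : Function.support φ ⊆ Set.Ici (0 : ℝ)) :
    ∀ ε > (0 : ℝ), ∃ N : ℕ, ∀ n m : ℕ, N ≤ n → N ≤ m →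
      nfdDist (boltzmannSchedule g n φ) (boltzmannSchedule g m φ) < ε :=
  boltzmannSchedule_cauchy_general g hCauchy φ hφ
end

section
/- For the Cauchy annealing schedule g_k = g₀ / k^α with any constant g₀ ≥ 0 and any α > 1, the corresponding Boltzmann selection schedule {Γ_(n)} satisfies the Cauchy criteria: for every NFD φ with E_φ ⊂ [0,∞), the sequence {Γ_(n)φ}_n is a Cauchy sequence with respect to the metric d. -/
open Filter Topology Function

theorem nfdDist_eq_sum_of_support_subset {ψ₁ ψ₂ : ℝ → ℝ} {s : Finset ℝ}
    (h₁ : support ψ₁ ⊆ s) (h₂ : support ψ₂ ⊆ s) :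
    nfdDist ψ₁ ψ₂ = ∑ x ∈ s, |ψ₁ x - ψ₂ x| := by
  refine finsum_eq_sum_of_support_subset _ fun x hx => ?_
  by_contra hxs
  simp [notMem_support.mp fun h => hxs (h₁ h), notMem_support.mp fun h => hxs (h₂ h)] at hx

theorem tendsto_nfdDist_atTop_zero {ι : Type*} [Nonempty ι] [SemilatticeSup ι]
    {ψ : ι → ℝ → ℝ} {s : Finset ℝ} (hs : ∀ i, support (ψ i) ⊆ s)
    (hψ : ∀ x, CauchySeq fun i => ψ i x) :
    Tendsto (fun p : ι × ι => nfdDist (ψ p.1) (ψ p.2)) atTop (𝓝 0) := by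
  simp only [nfdDist_eq_sum_of_support_subset (hs _) (hs _)]
  simpa only [Real.dist_eq, Finset.sum_const_zero] using
    tendsto_finsetSum s fun x _ => cauchySeq_iff_tendsto_dist_atTop_0.mp (hψ x)

theorem IsNFD.exists_pos_s9 {φ : ℝ → ℝ} (hφ : IsNFD φ) : ∃ y, 0 < φ y := by
  by_contra! h
  have hzero : ∀ y, φ y = 0 := fun y => le_antisymm (h y) (hφ.mem_Icc y).1
  simpa [hzero] using hφ.sum_eq_one

theorem IsNFD.finsum_mul_exp_pos_s9 {φ : ℝ → ℝ} (hφ : IsNFD φ) (b : ℝ) :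
    0 < ∑ᶠ y, φ y * Real.exp (y * b) := by
  obtain ⟨y, hy⟩ := hφ.exists_pos_s9
  exact finsum_pos (fun y => mul_nonneg (hφ.mem_Icc y).1 (Real.exp_pos _).le)
    ⟨y, mul_pos hy (Real.exp_pos _)⟩ (hφ.finite_support.subset (support_mul_subset_left _ _))

theorem continuous_finsum_mul_exp {φ : ℝ → ℝ} (hφ : (support φ).Finite) :
    Continuous fun b => ∑ᶠ y, φ y * Real.exp (y * b) := by
  have hsum : ∀ b, ∑ᶠ y, φ y * Real.exp (y * b) =
      ∑ y ∈ hφ.toFinset, φ y * Real.exp (y * b) := fun b =>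
    finsum_eq_sum_of_support_subset _ <| by
      simp only [Set.Finite.coe_toFinset]
      exact support_mul_subset_left _ _
  simp only [hsum]
  fun_prop

theorem IsNFD.continuous_boltzmannWeight {φ : ℝ → ℝ} (hφ : IsNFD φ) (x : ℝ) :
    Continuous fun b => φ x * Real.exp (x * b) / ∑ᶠ y, φ y * Real.exp (y * b) :=
  (by fun_prop : Continuous fun b => φ x * Real.exp (x * b)).div
    (continuous_finsum_mul_exp hφ.finite_support) fun b => (hφ.finsum_mul_exp_pos_s9 b).ne'

theorem support_boltzmannSchedule_subset (g : ℕ → ℝ) (n : ℕ) (φ : ℝ → ℝ) :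
    support (boltzmannSchedule g n φ) ⊆ support φ := fun x hx h =>
  hx (by simp [boltzmannSchedule, h])

theorem tendsto_sum_Icc_one_tsum {g : ℕ → ℝ} (hg : Summable g) :
    Tendsto (fun n => ∑ k ∈ Finset.Icc 1 n, g k) atTop (𝓝 (∑' k, g (k + 1))) := by
  have hIcc : ∀ n, ∑ k ∈ Finset.Icc 1 n, g k = ∑ k ∈ Finset.range n, g (k + 1) := by
    intro n
    rw [← Finset.Ico_add_one_right_eq_Icc, Finset.sum_Ico_eq_sum_range]
    simp [add_comm]
  simpa only [hIcc] using ((summable_nat_add_iff 1).mpr hg).hasSum.tendsto_sum_nat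

theorem summable_div_nat_rpow {α : ℝ} (hα : 1 < α) (c : ℝ) :
    Summable fun k : ℕ => c / (k : ℝ) ^ α := by
  simpa only [div_eq_mul_inv] using (Real.summable_nat_rpow_inv.mpr hα).mul_left c

theorem boltzmannSchedule_cauchySeq {g : ℕ → ℝ} (hg : Summable g) {φ : ℝ → ℝ} (hφ : IsNFD φ)
    (x : ℝ) : CauchySeq fun n => boltzmannSchedule g n φ x :=
  ((hφ.continuous_boltzmannWeight x).tendsto _ |>.comp (tendsto_sum_Icc_one_tsum hg)).cauchySeq

theorem cauchyAnnealing_boltzmannSchedule_cauchy_general (g₀ α : ℝ)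
    (hα : 1 < α) (φ : ℝ → ℝ) (hφ : IsNFD φ) :
    ∀ ε > (0 : ℝ), ∃ N : ℕ, ∀ n m : ℕ, N ≤ n → N ≤ m →
      nfdDist (boltzmannSchedule (fun k => g₀ / (k : ℝ) ^ α) n φ)
        (boltzmannSchedule (fun k => g₀ / (k : ℝ) ^ α) m φ) < ε := by
  intro ε hε
  have hdist := tendsto_nfdDist_atTop_zero (s := hφ.finite_support.toFinset)
    (fun n => by
      simpa only [Set.Finite.coe_toFinset] using support_boltzmannSchedule_subset _ n φ)
    (boltzmannSchedule_cauchySeq (summable_div_nat_rpow hα g₀) hφ)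
  obtain ⟨N, hN⟩ := eventually_atTop_prod_self'.mp (hdist.eventually (gt_mem_nhds hε))
  exact ⟨N, fun n m hn hm => hN n hn m hm⟩

/-- For the Cauchy annealing schedule `g_k = g₀ / k^α` with `g₀ ≥ 0` and `α > 1`,
the Boltzmann selection schedule satisfies the Cauchy criteria: for every NFD `φ`
the sequence `{Γ_(n)φ}` is Cauchy with respect to the metric `d`. -/
theorem cauchyAnnealing_boltzmannSchedule_cauchy (g₀ α : ℝ) (hg₀ : 0 ≤ g₀)
    (hα : 1 < α) (φ : ℝ → ℝ) (hφ : IsNFD φ)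
    (hnn : Function.support φ ⊆ Set.Ici (0 : ℝ)) :
    ∀ ε > (0 : ℝ), ∃ N : ℕ, ∀ n m : ℕ, N ≤ n → N ≤ m →
      nfdDist (boltzmannSchedule (fun k => g₀ / (k : ℝ) ^ α) n φ)
        (boltzmannSchedule (fun k => g₀ / (k : ℝ) ^ α) m φ) < ε :=
  cauchyAnnealing_boltzmannSchedule_cauchy_general g₀ α hα φ hφ
end
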